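/- Moment bound on the Grassmannian: For λ = (λ₁,…,λ_d) with 1 ≥ λ₁ ≥ … ≥ λ_k > 0 = λ_{k+1} = … = λ_d, P = O D_λ Oᵀ with O Haar-distributed on O(d), and any unit vector x ∈ ℝ^d, the t-th moment satisfies E[⟨P, xxᵀ⟩^t] ≤ (kt/d)^t. -/

import Mathlib

/-!
Write `y = Oᵀx`. Since `0 ≤ λ ≤ 1` and `λ` vanishes beyond `k`, `⟨P, xxᵀ⟩ = ∑ λₗ yₗ²` is at most
`φ(y) = ∑_{l<k} yₗ²`, so it suffices to bound `E[φ(Oᵀx)^t]`. Let `g` be a standard Gaussian vector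
independent of `O`. Haar invariance and the `2t`-homogeneity of `φ^t` give
`E[φ(Oᵀg)^t] = E[|g|^{2t}] · E[φ(Oᵀx)^t]`, while rotation invariance of `g` gives
`E[φ(Oᵀg)^t] = E[φ(g)^t]`. Finally `E[|g|^{2t}] ≥ (E|g|²)^t = d^t` by Jensen, and
`E[φ(g)^t] ≤ k^{t-1} ∑_{l<k} E[gₗ^{2t}] = k^t (2t-1)!! ≤ (kt)^t`.
-/

open Matrix MeasureTheory

noncomputable instance matrixMeasurableSpace (d : ℕ) :
    MeasurableSpace (Matrix (Fin d) (Fin d) ℝ) :=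
  (inferInstance : MeasurableSpace (Fin d → Fin d → ℝ))

open ProbabilityTheory Finset WithLp
open scoped Nat

lemma Matrix.transpose_transpose_mul_transpose_eq_one {ι : Type*} [Fintype ι] [DecidableEq ι]
    {M : Matrix ι ι ℝ} (hM : Mᵀ * M = 1) : Mᵀᵀ * Mᵀ = 1 := by
  rw [transpose_transpose]
  exact mul_eq_one_comm.1 hM

lemma Matrix.sum_sq_mulVec {ι : Type*} [Fintype ι] [DecidableEq ι] {M : Matrix ι ι ℝ}
    (hM : Mᵀ * M = 1) (v : ι → ℝ) : ∑ i, (M *ᵥ v) i ^ 2 = ∑ i, v i ^ 2 := by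
  have h : ∀ w : ι → ℝ, ∑ i, w i ^ 2 = w ⬝ᵥ w := fun w => by simp [dotProduct, sq]
  rw [h, h, dotProduct_mulVec, ← vecMul_transpose, vecMul_vecMul, hM, vecMul_one]

lemma Matrix.exists_orthogonal_mulVec_eq {ι : Type*} [Fintype ι] [DecidableEq ι] {v w : ι → ℝ}
    (h : ∑ i, v i ^ 2 = ∑ i, w i ^ 2) : ∃ R : Matrix ι ι ℝ, Rᵀ * R = 1 ∧ R *ᵥ v = w := by
  let e := Submodule.reflection (ℝ ∙ (toLp 2 v - toLp 2 w))ᗮ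
  have hnorm : ‖toLp 2 v‖ = ‖toLp 2 w‖ := by simp [EuclideanSpace.norm_eq, h]
  refine ⟨(toEuclideanCLM (𝕜 := ℝ)).symm (e : EuclideanSpace ℝ ι →L[ℝ] EuclideanSpace ℝ ι), ?_, ?_⟩
  · exact (mem_orthogonalGroup_iff' ι ℝ).1
      (Unitary.map_mem (F := (EuclideanSpace ℝ ι →L[ℝ] EuclideanSpace ℝ ι) ≃⋆ₐ[ℝ] Matrix ι ι ℝ)
        (toEuclideanCLM (𝕜 := ℝ)).symm (Unitary.linearIsometryEquiv.symm e).2)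
  · rw [← ofLp_toLp 2 v, ← ofLp_toEuclideanCLM, StarAlgEquiv.apply_symm_apply]
    simp [e, Submodule.reflection_sub hnorm]

lemma Matrix.trace_mul_diagonal_mul_transpose_mul_vecMulVec {ι : Type*} [Fintype ι]
    [DecidableEq ι] (A : Matrix ι ι ℝ) (lam x : ι → ℝ) :
    (A * diagonal lam * Aᵀ * vecMulVec x x).trace = ∑ l, lam l * (Aᵀ *ᵥ x) l ^ 2 := by
  rw [mul_vecMulVec, trace_vecMulVec, ← mulVec_mulVec, ← mulVec_mulVec, dotProduct_comm,
    dotProduct_mulVec, ← mulVec_transpose]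
  simp only [dotProduct, mulVec_diagonal]
  exact sum_congr rfl fun l _ => by ring

theorem Nat.doubleFactorial_two_mul_sub_one (n : ℕ) :
    (2 * n - 1)‼ = ∏ i ∈ range n, (2 * i + 1) := by
  cases n with
  | zero => rfl
  | succ m => simp [Finset.prod_range_succ', Nat.doubleFactorial_eq_prod_odd, mul_add]

theorem Nat.doubleFactorial_two_mul_sub_one_le (n : ℕ) : (2 * n - 1)‼ ≤ n ^ n := by
  have hpair : ∀ i ∈ range n, (2 * i + 1) * (2 * (n - 1 - i) + 1) ≤ n ^ 2 := by
    intro i hi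
    obtain ⟨j, rfl⟩ : ∃ j, n = i + j + 1 := ⟨n - 1 - i, by grind⟩
    rw [show i + j + 1 - 1 - i = j by omega]
    nlinarith [sq_nonneg ((i : ℤ) - j)]
  refine (Nat.pow_le_pow_iff_left two_ne_zero).1 ?_
  calc (2 * n - 1)‼ ^ 2
      = ∏ i ∈ range n, (2 * i + 1) * (2 * (n - 1 - i) + 1) := by
        rw [sq, Nat.doubleFactorial_two_mul_sub_one, prod_mul_distrib,
          prod_range_reflect (fun i => 2 * i + 1)]
    _ ≤ ∏ _i ∈ range n, n ^ 2 := prod_le_prod' hpair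
    _ = (n ^ n) ^ 2 := by rw [prod_const, card_range, ← pow_mul, ← pow_mul, mul_comm]

open Real Set in
theorem integral_pow_two_mul_gaussianReal (n : ℕ) :
    ∫ x, x ^ (2 * n) ∂gaussianReal 0 1 = ((2 * n - 1)‼ : ℝ) := by
  have hIoi : ∫ y in Ioi (0 : ℝ), y ^ (2 * n) * exp (-(1 / 2) * y ^ 2)
      = 2 ^ n * √2 * (1 / 2) * Gamma (n + 1 / 2) := by
    have h := integral_rpow_mul_exp_neg_mul_rpow (p := 2) (q := ((2 * n : ℕ) : ℝ)) (b := 1 / 2)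
      two_pos (by linarith [(Nat.cast_nonneg (2 * n) : (0 : ℝ) ≤ _)]) one_half_pos
    have e1 : (((2 * n : ℕ) : ℝ) + 1) / 2 = n + 1 / 2 := by push_cast; ring
    have e2 : (1 / 2 : ℝ) ^ (-(((2 * n : ℕ) : ℝ) + 1) / 2) = 2 ^ n * √2 := by
      rw [neg_div, e1, rpow_neg (by norm_num), one_div, inv_rpow (by norm_num), inv_inv,
        rpow_add two_pos, rpow_natCast, sqrt_eq_rpow, one_div]
    rw [e1, e2] at h
    rw [← h]
    refine setIntegral_congr_fun measurableSet_Ioi fun y _ => ?_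
    simp only [← rpow_natCast, Nat.cast_ofNat]
  rw [integral_gaussianReal_eq_integral_smul one_ne_zero]
  have hpdf : ∀ x : ℝ, gaussianPDFReal 0 1 x • x ^ (2 * n)
      = (√(2 * π))⁻¹ * ((fun y => y ^ (2 * n) * exp (-(1 / 2) * y ^ 2)) |x|) := by
    intro x
    simp only [gaussianPDFReal, NNReal.coe_one, mul_one, sub_zero, smul_eq_mul, pow_mul, sq_abs]
    ring_nf
  simp_rw [hpdf]
  rw [integral_const_mul, integral_comp_abs (f := fun y => y ^ (2 * n) * exp (-(1 / 2) * y ^ 2)),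
    hIoi, Real.Gamma_nat_add_half, sqrt_mul zero_le_two]
  field_simp

lemma integrable_pow_gaussianReal (n : ℕ) : Integrable (fun x : ℝ => x ^ n) (gaussianReal 0 1) := by
  refine ((memLp_id_gaussianReal n).integrable_norm_pow').mono' (by fun_prop) ?_
  filter_upwards with x
  simp [norm_pow]

lemma sum_sq_pow_succ_le {ι : Type*} (s : Finset ι) (v : ι → ℝ) (n : ℕ) :
    (∑ i ∈ s, v i ^ 2) ^ (n + 1) ≤ (#s : ℝ) ^ n * ∑ i ∈ s, v i ^ (2 * (n + 1)) := by
  simpa [← pow_mul] using pow_sum_le_card_mul_sum_pow (f := fun i => v i ^ 2)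
    (fun i _ => sq_nonneg _) n

lemma abs_sum_sq_pow_le {ι : Type*} [Fintype ι] (s : Finset ι) (v : ι → ℝ) (t : ℕ) :
    |(∑ i ∈ s, v i ^ 2) ^ t| ≤ (∑ i, v i ^ 2) ^ t := by
  rw [abs_of_nonneg (by positivity)]
  exact pow_le_pow_left₀ (by positivity)
    (sum_le_sum_of_subset_of_nonneg (subset_univ s) fun i _ _ => sq_nonneg _) t

section StdGaussianPi

variable {ι : Type*} [Fintype ι]

variable (ι) in
noncomputable abbrev stdGaussianPi : Measure (ι → ℝ) :=
  Measure.pi fun _ : ι => gaussianReal 0 1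

lemma stdGaussianPi_eq_map_ofLp :
    stdGaussianPi ι = (stdGaussian (EuclideanSpace ℝ ι)).map (ofLp (p := 2)) := by
  rw [← map_pi_eq_stdGaussian, Measure.map_map (by fun_prop) (by fun_prop)]
  exact Measure.map_id.symm

lemma map_mulVec_stdGaussianPi [DecidableEq ι] {M : Matrix ι ι ℝ} (hM : Mᵀ * M = 1) :
    (stdGaussianPi ι).map (M *ᵥ ·) = stdGaussianPi ι := by
  let e : EuclideanSpace ℝ ι ≃ₗᵢ[ℝ] EuclideanSpace ℝ ι := Unitary.linearIsometryEquiv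
    ⟨toEuclideanCLM (𝕜 := ℝ) M,
      Unitary.map_mem toEuclideanCLM ((mem_orthogonalGroup_iff' ι ℝ).2 hM)⟩
  have he : (M *ᵥ ·) ∘ ofLp = ofLp ∘ e := rfl
  rw [stdGaussianPi_eq_map_ofLp, Measure.map_map (by fun_prop) (by fun_prop), he,
    ← Measure.map_map (by fun_prop) (by fun_prop), stdGaussian_map]

lemma integrable_eval_pow_stdGaussianPi (i : ι) (n : ℕ) :
    Integrable (fun v : ι → ℝ => v i ^ n) (stdGaussianPi ι) :=
  integrable_comp_eval (f := fun x => x ^ n) (integrable_pow_gaussianReal n)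

lemma integral_eval_pow_two_mul_stdGaussianPi (i : ι) (n : ℕ) :
    ∫ v, v i ^ (2 * n) ∂stdGaussianPi ι = ((2 * n - 1)‼ : ℝ) :=
  (integral_comp_eval (f := fun x => x ^ (2 * n)) (by fun_prop)).trans
    (integral_pow_two_mul_gaussianReal n)

lemma integral_eval_sq_stdGaussianPi (i : ι) : ∫ v, v i ^ 2 ∂stdGaussianPi ι = 1 := by
  simpa using integral_eval_pow_two_mul_stdGaussianPi i 1

lemma integrable_sum_sq_pow_stdGaussianPi (s : Finset ι) (t : ℕ) :
    Integrable (fun v : ι → ℝ => (∑ i ∈ s, v i ^ 2) ^ t) (stdGaussianPi ι) := by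
  rcases t with _ | n
  · simp
  refine ((integrable_finsetSum s fun i _ =>
    integrable_eval_pow_stdGaussianPi i (2 * (n + 1))).const_mul
      ((#s : ℝ) ^ n)).mono' (Measurable.aestronglyMeasurable (by fun_prop)) ?_
  filter_upwards with v
  rw [Real.norm_of_nonneg (by positivity)]
  exact sum_sq_pow_succ_le s v n

lemma integral_sum_sq_pow_stdGaussianPi_le (s : Finset ι) (t : ℕ) :
    ∫ v, (∑ i ∈ s, v i ^ 2) ^ t ∂stdGaussianPi ι ≤ ((#s : ℝ) * t) ^ t := by
  rcases t with _ | n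
  · simp
  calc ∫ v, (∑ i ∈ s, v i ^ 2) ^ (n + 1) ∂stdGaussianPi ι
      ≤ ∫ v, (#s : ℝ) ^ n * ∑ i ∈ s, v i ^ (2 * (n + 1)) ∂stdGaussianPi ι :=
        integral_mono (integrable_sum_sq_pow_stdGaussianPi s _)
          ((integrable_finsetSum s fun i _ => integrable_eval_pow_stdGaussianPi i _).const_mul _)
          fun v => sum_sq_pow_succ_le s v n
    _ = (#s : ℝ) ^ (n + 1) * (2 * (n + 1) - 1)‼ := by
        rw [integral_const_mul, integral_finsetSum _ fun i _ =>
          integrable_eval_pow_stdGaussianPi i _]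
        simp [integral_eval_pow_two_mul_stdGaussianPi, pow_succ, mul_assoc]
    _ ≤ (#s : ℝ) ^ (n + 1) * ((n + 1 : ℕ) : ℝ) ^ (n + 1) := by
        gcongr
        exact_mod_cast Nat.doubleFactorial_two_mul_sub_one_le (n + 1)
    _ = ((#s : ℝ) * (n + 1 : ℕ)) ^ (n + 1) := (mul_pow _ _ _).symm

lemma card_pow_le_integral_sum_sq_pow_stdGaussianPi (t : ℕ) :
    (Fintype.card ι : ℝ) ^ t ≤ ∫ v, (∑ i, v i ^ 2) ^ t ∂stdGaussianPi ι := by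
  have hmean : ∫ v, ∑ i, v i ^ 2 ∂stdGaussianPi ι = Fintype.card ι := by
    simp [integral_finsetSum _ fun i _ => integrable_eval_pow_stdGaussianPi i 2,
      integral_eval_sq_stdGaussianPi]
  rw [← hmean]
  exact (convexOn_pow t).map_integral_le (continuous_pow t).continuousOn isClosed_Ici
    (.of_forall fun v => Set.mem_Ici.2 (by positivity))
    (by simpa using integrable_sum_sq_pow_stdGaussianPi Finset.univ 1)
    (integrable_sum_sq_pow_stdGaussianPi Finset.univ t)

end StdGaussianPi

instance matrixBorelSpace (d : ℕ) : BorelSpace (Matrix (Fin d) (Fin d) ℝ) :=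
  inferInstanceAs (BorelSpace (Fin d → Fin d → ℝ))

section RandomOrthogonal

variable {Ω : Type*} [MeasurableSpace Ω] {μ : Measure Ω} {d : ℕ}
  {O : Ω → Matrix (Fin d) (Fin d) ℝ}

lemma integrable_sum_sq_transpose_mulVec_pow [IsFiniteMeasure μ] (hO : Measurable O)
    (hOrth : ∀ ω, (O ω)ᵀ * O ω = 1) (S : Finset (Fin d)) (t : ℕ) (x : Fin d → ℝ) :
    Integrable (fun ω => (∑ l ∈ S, ((O ω)ᵀ *ᵥ x) l ^ 2) ^ t) μ := by
  refine .of_bound (Measurable.aestronglyMeasurable (by fun_prop)) ((∑ i, x i ^ 2) ^ t)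
    (.of_forall fun ω => ?_)
  simpa [sum_sq_mulVec (transpose_transpose_mul_transpose_eq_one (hOrth ω))] using
    abs_sum_sq_pow_le S ((O ω)ᵀ *ᵥ x) t

lemma integral_comp_transpose_mulVec_eq_of_sum_sq_eq (hO : Measurable O)
    (hHaar : ∀ Q : Matrix (Fin d) (Fin d) ℝ, Qᵀ * Q = 1 →
      Measure.map (fun ω => Q * O ω) μ = Measure.map O μ)
    {f : (Fin d → ℝ) → ℝ} (hf : Measurable f) {v w : Fin d → ℝ}
    (h : ∑ i, v i ^ 2 = ∑ i, w i ^ 2) :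
    ∫ ω, f ((O ω)ᵀ *ᵥ v) ∂μ = ∫ ω, f ((O ω)ᵀ *ᵥ w) ∂μ := by
  obtain ⟨R, hR, hRw⟩ := exists_orthogonal_mulVec_eq h.symm
  have hg : Measurable fun M : Matrix (Fin d) (Fin d) ℝ => f (Mᵀ *ᵥ w) := hf.comp (by fun_prop)
  calc ∫ ω, f ((O ω)ᵀ *ᵥ v) ∂μ = ∫ ω, f ((Rᵀ * O ω)ᵀ *ᵥ w) ∂μ := by
        simp [transpose_mul, ← mulVec_mulVec, hRw]
    _ = ∫ M, f (Mᵀ *ᵥ w) ∂μ.map (fun ω => Rᵀ * O ω) :=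
        (integral_map (by fun_prop) hg.aestronglyMeasurable).symm
    _ = ∫ ω, f ((O ω)ᵀ *ᵥ w) ∂μ := by
        rw [hHaar _ (transpose_transpose_mul_transpose_eq_one hR),
          integral_map hO.aemeasurable hg.aestronglyMeasurable]

theorem integral_comp_transpose_mulVec_mul_integral_sum_sq_pow [IsProbabilityMeasure μ]
    (hO : Measurable O) (hOrth : ∀ ω, (O ω)ᵀ * O ω = 1)
    (hHaar : ∀ Q : Matrix (Fin d) (Fin d) ℝ, Qᵀ * Q = 1 →
      Measure.map (fun ω => Q * O ω) μ = Measure.map O μ)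
    {t : ℕ} {f : (Fin d → ℝ) → ℝ} (hf : Measurable f)
    (hf_smul : ∀ (c : ℝ) v, f (c • v) = c ^ (2 * t) * f v)
    (hf_le : ∀ v, |f v| ≤ (∑ i, v i ^ 2) ^ t) {x : Fin d → ℝ} (hx : ∑ i, x i ^ 2 = 1) :
    (∫ ω, f ((O ω)ᵀ *ᵥ x) ∂μ) * ∫ v, (∑ i, v i ^ 2) ^ t ∂stdGaussianPi (Fin d) =
      ∫ v, f v ∂stdGaussianPi (Fin d) := by
  set γ := stdGaussianPi (Fin d)
  have hscale : ∀ v, ∫ ω, f ((O ω)ᵀ *ᵥ v) ∂μ =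
      (∑ i, v i ^ 2) ^ t * ∫ ω, f ((O ω)ᵀ *ᵥ x) ∂μ := by
    intro v
    set r := √(∑ i, v i ^ 2)
    have hr : r ^ 2 = ∑ i, v i ^ 2 := Real.sq_sqrt (by positivity)
    rw [integral_comp_transpose_mulVec_eq_of_sum_sq_eq hO hHaar hf (w := r • x)
      (by simp [mul_pow, ← mul_sum, hx, hr]), ← integral_const_mul]
    simp only [mulVec_smul, hf_smul, pow_mul, hr]
  have hrot : ∀ ω, ∫ v, f ((O ω)ᵀ *ᵥ v) ∂γ = ∫ v, f v ∂γ := fun ω => by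
    rw [← integral_map (by fun_prop) hf.aestronglyMeasurable,
      map_mulVec_stdGaussianPi (transpose_transpose_mul_transpose_eq_one (hOrth ω))]
  have hint : Integrable (fun p : (Fin d → ℝ) × Ω => f ((O p.2)ᵀ *ᵥ p.1)) (γ.prod μ) := by
    refine ((integrable_sum_sq_pow_stdGaussianPi univ t).comp_fst μ).mono'
      (hf.comp (by fun_prop)).aestronglyMeasurable (.of_forall fun p => ?_)
    simpa [sum_sq_mulVec (transpose_transpose_mul_transpose_eq_one (hOrth p.2))] using
      hf_le ((O p.2)ᵀ *ᵥ p.1)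
  calc (∫ ω, f ((O ω)ᵀ *ᵥ x) ∂μ) * ∫ v, (∑ i, v i ^ 2) ^ t ∂γ
      = ∫ v, (∑ i, v i ^ 2) ^ t * ∫ ω, f ((O ω)ᵀ *ᵥ x) ∂μ ∂γ := by
        rw [integral_mul_const, mul_comm]
    _ = ∫ v, ∫ ω, f ((O ω)ᵀ *ᵥ v) ∂μ ∂γ := integral_congr_ae (.of_forall fun v => (hscale v).symm)
    _ = ∫ ω, ∫ v, f ((O ω)ᵀ *ᵥ v) ∂γ ∂μ := integral_integral_swap hint
    _ = ∫ v, f v ∂γ := by simp [hrot]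

theorem integral_sum_sq_transpose_mulVec_pow_le [IsProbabilityMeasure μ] [NeZero d]
    (hO : Measurable O) (hOrth : ∀ ω, (O ω)ᵀ * O ω = 1)
    (hHaar : ∀ Q : Matrix (Fin d) (Fin d) ℝ, Qᵀ * Q = 1 →
      Measure.map (fun ω => Q * O ω) μ = Measure.map O μ)
    (S : Finset (Fin d)) (t : ℕ) {x : Fin d → ℝ} (hx : ∑ i, x i ^ 2 = 1) :
    ∫ ω, (∑ l ∈ S, ((O ω)ᵀ *ᵥ x) l ^ 2) ^ t ∂μ ≤ ((#S : ℝ) * t / d) ^ t := by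
  have hdecouple := integral_comp_transpose_mulVec_mul_integral_sum_sq_pow hO hOrth hHaar
    (t := t) (f := fun v => (∑ l ∈ S, v l ^ 2) ^ t) (by fun_prop)
    (fun c v => by simp only [Pi.smul_apply, smul_eq_mul, mul_pow, ← mul_sum, pow_mul])
    (fun v => abs_sum_sq_pow_le S v t) hx
  have hd : (0 : ℝ) < d ^ t := pow_pos (Nat.cast_pos.2 (Nat.pos_of_neZero d)) t
  rw [div_pow, le_div_iff₀ hd]
  calc (∫ ω, (∑ l ∈ S, ((O ω)ᵀ *ᵥ x) l ^ 2) ^ t ∂μ) * d ^ t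
      ≤ (∫ ω, (∑ l ∈ S, ((O ω)ᵀ *ᵥ x) l ^ 2) ^ t ∂μ) *
          ∫ v, (∑ i, v i ^ 2) ^ t ∂stdGaussianPi (Fin d) := by
        gcongr
        simpa using card_pow_le_integral_sum_sq_pow_stdGaussianPi (ι := Fin d) t
    _ = ∫ v, (∑ l ∈ S, v l ^ 2) ^ t ∂stdGaussianPi (Fin d) := hdecouple
    _ ≤ ((#S : ℝ) * t) ^ t := integral_sum_sq_pow_stdGaussianPi_le S t

end RandomOrthogonal

theorem grassmannian_moment_bound_general
    {Ω : Type*} [MeasurableSpace Ω] (μ : Measure Ω) [IsProbabilityMeasure μ]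
    {d k : ℕ} (hk : 1 ≤ k) (hkd : k ≤ d)
    (lam : Fin d → ℝ)
    (hle1 : ∀ i : Fin d, lam i ≤ 1)
    (hpos : ∀ i : Fin d, (i : ℕ) < k → 0 < lam i)
    (hzero : ∀ i : Fin d, k ≤ (i : ℕ) → lam i = 0)
    (O : Ω → Matrix (Fin d) (Fin d) ℝ) (hOmeas : Measurable O)
    (hOrth : ∀ ω, (O ω)ᵀ * O ω = 1)
    (hHaar : ∀ Q : Matrix (Fin d) (Fin d) ℝ, Qᵀ * Q = 1 →
      Measure.map (fun ω => Q * O ω) μ = Measure.map O μ)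
    (x : Fin d → ℝ) (hx : ∑ i, x i ^ 2 = 1) (t : ℕ) :
    ∫ ω, ((O ω * diagonal lam * (O ω)ᵀ) * vecMulVec x x).trace ^ t ∂μ ≤
      ((k : ℝ) * t / d) ^ t := by
  have : NeZero d := ⟨by omega⟩
  have htrace : ∀ ω, 0 ≤ ((O ω * diagonal lam * (O ω)ᵀ) * vecMulVec x x).trace ∧
      ((O ω * diagonal lam * (O ω)ᵀ) * vecMulVec x x).trace ≤
        ∑ l ∈ {l : Fin d | (l : ℕ) < k}, ((O ω)ᵀ *ᵥ x) l ^ 2 := by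
    intro ω
    have hlam : ∀ l, 0 ≤ lam l := fun l =>
      (lt_or_ge (l : ℕ) k).elim (fun hl => (hpos l hl).le) fun hl => (hzero l hl).ge
    rw [trace_mul_diagonal_mul_transpose_mul_vecMulVec, sum_filter]
    refine ⟨sum_nonneg fun l _ => mul_nonneg (hlam l) (sq_nonneg _), sum_le_sum fun l _ => ?_⟩
    split_ifs with hl
    · exact mul_le_of_le_one_left (sq_nonneg _) (hle1 l)
    · rw [hzero l (not_lt.1 hl), zero_mul]
  calc ∫ ω, ((O ω * diagonal lam * (O ω)ᵀ) * vecMulVec x x).trace ^ t ∂μ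
      ≤ ∫ ω, (∑ l ∈ {l : Fin d | (l : ℕ) < k}, ((O ω)ᵀ *ᵥ x) l ^ 2) ^ t ∂μ :=
        integral_mono_of_nonneg (.of_forall fun ω => pow_nonneg (htrace ω).1 t)
          (integrable_sum_sq_transpose_mulVec_pow hOmeas hOrth _ t x)
          (.of_forall fun ω => pow_le_pow_left₀ (htrace ω).1 (htrace ω).2 t)
    _ ≤ ((#{l : Fin d | (l : ℕ) < k} : ℝ) * t / d) ^ t :=
        integral_sum_sq_transpose_mulVec_pow_le hOmeas hOrth hHaar _ t hx
    _ ≤ ((k : ℝ) * t / d) ^ t := by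
        gcongr
        exact_mod_cast Fin.card_filter_val_lt.trans_le (min_le_right d k)

/-- Moment bound on the Grassmannian: for `λ` with `1 ≥ λ₁ ≥ … ≥ λ_k > 0 = λ_{k+1} = … = λ_d`,
`P = O D_λ Oᵀ` with `O` Haar-distributed on `O(d)`, and any unit vector `x ∈ ℝ^d`,
`E[⟨P,xxᵀ⟩^t] ≤ (kt/d)^t`. -/
theorem grassmannian_moment_bound
    {Ω : Type*} [MeasurableSpace Ω] (μ : Measure Ω) [IsProbabilityMeasure μ]
    {d k : ℕ} (hk : 1 ≤ k) (hkd : k ≤ d)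
    (lam : Fin d → ℝ)
    (hmono : ∀ i j : Fin d, i ≤ j → lam j ≤ lam i)
    (hle1 : ∀ i : Fin d, lam i ≤ 1)
    (hpos : ∀ i : Fin d, (i : ℕ) < k → 0 < lam i)
    (hzero : ∀ i : Fin d, k ≤ (i : ℕ) → lam i = 0)
    (O : Ω → Matrix (Fin d) (Fin d) ℝ) (hOmeas : Measurable O)
    (hOrth : ∀ ω, (O ω)ᵀ * O ω = 1)
    (hHaar : ∀ Q : Matrix (Fin d) (Fin d) ℝ, Qᵀ * Q = 1 →
      Measure.map (fun ω => Q * O ω) μ = Measure.map O μ)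
    (x : Fin d → ℝ) (hx : ∑ i, x i ^ 2 = 1) (t : ℕ) (ht : 1 ≤ t) :
    ∫ ω, ((O ω * diagonal lam * (O ω)ᵀ) * vecMulVec x x).trace ^ t ∂μ ≤
      ((k : ℝ) * t / d) ^ t :=
  grassmannian_moment_bound_general μ hk hkd lam hle1 hpos hzero O hOmeas hOrth hHaar x hx t
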